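/- arXiv:2209.02630 — 2 statements merged into one kernel-verified Lean document; each statement's English description precedes it below -/
import Mathlib

section
/- If f : ℝ → ℝ is locally absolutely continuous (with locally integrable derivative f'), then for all j ≥ 1 and ν ∈ ℤ, ∫ f'(x)·N₂(2^j x - ν) dx = -2^j · ∫ f(x)·h̃_{j-1,ν}(x) dx, where h̃_{j-1,ν}(x) = h(2^{j-1} x - ν/2). -/
/-!
`f` is a primitive of the locally integrable `f'`, hence absolutely continuous, so integration by
parts moves the derivative onto `x ↦ N₂(2^j x - ν)`. That function is Lipschitz and vanishes
outside `(ν / 2^j, (ν + 2) / 2^j)`, so there are no boundary terms, and off three points its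
derivative is `2^j h((2^j x - ν) / 2) = 2^j h(2^(j-1) x - ν / 2)`.
-/

open MeasureTheory Real

/-- The hat function `N₂`. -/
noncomputable def hat (x : ℝ) : ℝ :=
  if 0 ≤ x ∧ x ≤ 1 then x else if 1 ≤ x ∧ x ≤ 2 then 2 - x else 0

/-- The Haar mother function `h = 𝟙_{[0,1/2)} - 𝟙_{[1/2,1)}`. -/
noncomputable def haar (x : ℝ) : ℝ :=
  if 0 ≤ x ∧ x < 1/2 then 1 else if 1/2 ≤ x ∧ x < 1 then -1 else 0

open Set Function

theorem AbsolutelyContinuousOnInterval.integral_deriv_mul_eq_neg_integral_mul_deriv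
    {f g : ℝ → ℝ} {a b : ℝ} (hab : a ≤ b) (hf : AbsolutelyContinuousOnInterval f a b)
    (hg : AbsolutelyContinuousOnInterval g a b) (hg₀ : ∀ x ∉ Ioo a b, g x = 0) :
    ∫ x, deriv f x * g x = -∫ x, f x * deriv g x := by
  have hfg : support (fun x => deriv f x * g x) ⊆ Ioc a b := fun x hx =>
    Ioo_subset_Ioc_self <| by_contra fun h => hx (by simp [hg₀ x h])
  have hg'₀ : ∀ x ∉ Icc a b, deriv g x = 0 := fun x hx => by
    have hloc : g =ᶠ[nhds x] fun _ => 0 := by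
      filter_upwards [isClosed_Icc.isOpen_compl.mem_nhds hx] with y hy
      exact hg₀ y fun h => hy (Ioo_subset_Icc_self h)
    exact hloc.deriv_eq.trans (deriv_const x 0)
  have hfg' : ∫ x, f x * deriv g x = ∫ x in a..b, f x * deriv g x := by
    rw [intervalIntegral.integral_of_le hab, ← integral_Icc_eq_integral_Ioc,
      setIntegral_eq_integral_of_forall_compl_eq_zero fun x hx => by simp [hg'₀ x hx]]
  rw [← intervalIntegral.integral_eq_integral_of_support_subset hfg, hfg',
    hf.integral_mul_deriv_eq_deriv_mul hg, hg₀ a (by simp), hg₀ b (by simp)]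
  ring

theorem absolutelyContinuousOnInterval_of_eq_add_integral {f f' : ℝ → ℝ}
    (hf' : LocallyIntegrable f' volume) (hf : ∀ x, f x = f 0 + ∫ t in (0 : ℝ)..x, f' t)
    (a b : ℝ) : AbsolutelyContinuousOnInterval f a b := by
  have hF : AbsolutelyContinuousOnInterval (fun x => ∫ t in (0 : ℝ)..x, f' t) a b :=
    ((hf'.integrableOn_isCompact (isCompact_uIcc (a := min (min a b) 0)
      (b := max (max a b) 0))).intervalIntegrable.absolutelyContinuousOnInterval_intervalIntegral
      (by simp)).mono (uIcc_subset_uIcc (by grind [mem_uIcc]) (by grind [mem_uIcc]))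
  rw [funext hf]
  exact (LipschitzWith.const (f 0)).lipschitzOnWith.absolutelyContinuousOnInterval.fun_add hF

theorem deriv_ae_eq_of_eq_add_integral {f f' : ℝ → ℝ}
    (hf' : LocallyIntegrable f' volume) (hf : ∀ x, f x = f 0 + ∫ t in (0 : ℝ)..x, f' t) :
    deriv f =ᵐ[volume] f' := by
  filter_upwards [LocallyIntegrable.ae_hasDerivAt_integral hf'] with x hx
  rw [funext hf]
  exact ((hx 0).const_add (f 0)).deriv

theorem lipschitzWith_hat : LipschitzWith 1 hat := by
  refine LipschitzWith.of_dist_le_mul fun x y => ?_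
  simp only [NNReal.coe_one, one_mul, Real.dist_eq, hat]
  split_ifs <;> grind

theorem hat_eq_zero_of_notMem_Ioo {y : ℝ} (hy : y ∉ Ioo 0 2) : hat y = 0 := by
  simp only [mem_Ioo, not_and_or, not_lt] at hy
  unfold hat
  split_ifs <;> rcases hy with hy | hy <;> linarith

theorem hasDerivAt_hat {y : ℝ} (h₀ : y ≠ 0) (h₁ : y ≠ 1) (h₂ : y ≠ 2) :
    HasDerivAt hat (haar (y / 2)) y := by
  rcases lt_or_gt_of_ne h₀ with hy₀ | hy₀
  · have hloc : hat =ᶠ[nhds y] fun _ => 0 := by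
      filter_upwards [Iio_mem_nhds hy₀] with z hz
      exact hat_eq_zero_of_notMem_Ioo fun h => lt_asymm hz h.1
    have hval : haar (y / 2) = 0 := by unfold haar; split_ifs <;> linarith
    rw [hval]
    exact (hasDerivAt_const y 0).congr_of_eventuallyEq hloc
  rcases lt_or_gt_of_ne h₁ with hy₁ | hy₁
  · have hloc : hat =ᶠ[nhds y] id := by
      filter_upwards [Ioo_mem_nhds hy₀ hy₁] with z hz
      simp only [hat, id]
      rw [if_pos ⟨hz.1.le, hz.2.le⟩]
    have hval : haar (y / 2) = 1 := by unfold haar; rw [if_pos ⟨by linarith, by linarith⟩]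
    rw [hval]
    exact (hasDerivAt_id y).congr_of_eventuallyEq hloc
  rcases lt_or_gt_of_ne h₂ with hy₂ | hy₂
  · have hloc : hat =ᶠ[nhds y] fun z => 2 - z := by
      filter_upwards [Ioo_mem_nhds hy₁ hy₂] with z hz
      simp only [hat]
      rw [if_neg fun h => by linarith [h.2, hz.1], if_pos ⟨hz.1.le, hz.2.le⟩]
    have hval : haar (y / 2) = -1 := by
      unfold haar
      rw [if_neg fun h => by linarith [h.2], if_pos ⟨by linarith, by linarith⟩]
    rw [hval]
    simpa using ((hasDerivAt_id y).const_sub 2).congr_of_eventuallyEq hloc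
  · have hloc : hat =ᶠ[nhds y] fun _ => 0 := by
      filter_upwards [Ioi_mem_nhds hy₂] with z hz
      exact hat_eq_zero_of_notMem_Ioo fun h => lt_asymm hz h.2
    have hval : haar (y / 2) = 0 := by unfold haar; split_ifs <;> linarith
    rw [hval]
    exact (hasDerivAt_const y 0).congr_of_eventuallyEq hloc

theorem hat_comp_affine_eq_zero_of_notMem_Ioo {c ν x : ℝ} (hc : 0 < c)
    (hx : x ∉ Ioo (ν / c) ((ν + 2) / c)) : hat (c * x - ν) = 0 := by
  refine hat_eq_zero_of_notMem_Ioo fun h => hx ⟨?_, ?_⟩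
  · rw [div_lt_iff₀ hc]; linarith [h.1]
  · rw [lt_div_iff₀ hc]; linarith [h.2]

theorem deriv_hat_comp_affine_ae_eq {c : ℝ} (hc : c ≠ 0) (ν : ℝ) :
    deriv (fun x => hat (c * x - ν)) =ᵐ[volume] fun x => c * haar ((c * x - ν) / 2) := by
  have hnull : volume ((fun x => c * x - ν) ⁻¹' {0, 1, 2}) = 0 :=
    ((toFinite _).preimage
      (sub_left_injective.comp (mul_right_injective₀ hc)).injOn).measure_zero _
  filter_upwards [measure_eq_zero_iff_ae_notMem.1 hnull] with x hx
  simp only [mem_preimage, mem_insert_iff, mem_singleton_iff, not_or] at hx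
  obtain ⟨h₀, h₁, h₂⟩ := hx
  have hlin : HasDerivAt (fun x => c * x - ν) c x := by
    simpa using ((hasDerivAt_id x).const_mul c).sub_const ν
  exact ((hasDerivAt_hat h₀ h₁ h₂).comp x hlin).deriv.trans (mul_comm _ _)

/-- Integration by parts against a hat function: if `f` is locally absolutely continuous
with locally integrable derivative `f'`, then
`∫ f'(x) N₂(2^j x - ν) dx = -2^j ∫ f(x) h̃_{j-1,ν}(x) dx` where `h̃_{j-1,ν}(x) = h(2^{j-1}x - ν/2)`. -/
theorem deriv_pairing_hat (f f' : ℝ → ℝ)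
    (hf' : LocallyIntegrable f' volume)
    (hf : ∀ x : ℝ, f x = f 0 + ∫ t in (0:ℝ)..x, f' t)
    (j : ℕ) (hj : 1 ≤ j) (ν : ℤ) :
    ∫ x : ℝ, f' x * hat (2 ^ j * x - (ν : ℝ)) =
      -(2 ^ j) * ∫ x : ℝ, f x * haar (2 ^ (j - 1) * x - (ν : ℝ) / 2) := by
  set c : ℝ := 2 ^ j
  have hc : 0 < c := by positivity
  have hscale (x : ℝ) : 2 ^ (j - 1) * x - (ν : ℝ) / 2 = (c * x - ν) / 2 := by
    rw [show c = 2 * 2 ^ (j - 1) by rw [← pow_succ', Nat.sub_add_cancel hj]]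
    ring
  have hf_ac := absolutelyContinuousOnInterval_of_eq_add_integral hf' hf (ν / c) ((ν + 2) / c)
  have hg_ac : AbsolutelyContinuousOnInterval (fun x => hat (c * x - ν)) (ν / c) ((ν + 2) / c) :=
    (lipschitzWith_hat.comp ((lipschitzWith_smul c).sub (LipschitzWith.const (ν : ℝ)))
      ).lipschitzOnWith.absolutelyContinuousOnInterval
  calc ∫ x, f' x * hat (c * x - ν)
      = ∫ x, deriv f x * hat (c * x - ν) := by
        refine integral_congr_ae ?_
        filter_upwards [deriv_ae_eq_of_eq_add_integral hf' hf] with x hx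
        rw [hx]
    _ = -∫ x, f x * deriv (fun x => hat (c * x - ν)) x :=
        hf_ac.integral_deriv_mul_eq_neg_integral_mul_deriv (by gcongr; linarith) hg_ac
          fun x hx => hat_comp_affine_eq_zero_of_notMem_Ioo hc hx
    _ = -c * ∫ x, f x * haar (2 ^ (j - 1) * x - ν / 2) := by
        rw [neg_mul, ← integral_const_mul]
        congr 1
        refine integral_congr_ae ?_
        filter_upwards [deriv_hat_comp_affine_ae_eq hc.ne' ν] with x hx
        rw [hx, hscale]
        ring
end

section
/- Let 0 < p ≤ ∞ and ℓ ≥ 0 be an integer. For any measurable f : ℝ → ℂ, define 𝔐_j f(x) = sup_{|h| ≤ 2^{-j}} |f(x+h)| and 𝔐*_j f(x) = sup_{|h| ≤ 2^{-j+2}} |f(x+h)|. Then ‖𝔐*_j f‖_{L^p} ≤ C·2^{ℓ/p}·‖𝔐_{j+ℓ} f‖_{L^p}, with C depending only on p. -/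
open MeasureTheory Real
open scoped ENNReal

/-- The maximal function `x ↦ sup_{|h| ≤ r} |f(x+h)|`, valued in `ℝ≥0∞`. -/
noncomputable def Mmax (r : ℝ) (f : ℝ → ℂ) (x : ℝ) : ℝ≥0∞ :=
  ⨆ h : {h : ℝ // |h| ≤ r}, (‖f (x + h.1)‖₊ : ℝ≥0∞)

/-- The `L^p` norm of an `ℝ≥0∞`-valued function, with the essential-sup modification
for `p = ∞`. -/
noncomputable def pNorm (p : ℝ≥0∞) (g : ℝ → ℝ≥0∞) : ℝ≥0∞ :=
  if p = ∞ then essSup g volume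
  else (∫⁻ x : ℝ, (g x) ^ p.toReal) ^ (1 / p.toReal)

/-!
Every shift `|h| ≤ 2^{-j+2}` lies within distance `< 2^{-(j+ℓ)}` of some `ν 2^{-(j+ℓ)}` with
`|ν| ≤ 2^{ℓ+2}`, so `𝔐*_j f` is dominated by the maximum of `2^{ℓ+3} + 1` translates of a
maximal function at scale `2^{-(j+ℓ)}`. Bounding the maximum by the sum of `p`-th powers (or,
for `p = ∞`, by the essential supremum almost everywhere) and using translation invariance of
Lebesgue measure gives the factor `(2^{ℓ+3} + 1)^{1/p} ≤ 2^{4/p} 2^{ℓ/p}`.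
-/

/-- Unlike `Mmax`, the open-ball version is lower semicontinuous, hence measurable, for
arbitrary `f`. -/
noncomputable def MmaxOpen (r : ℝ) (f : ℝ → ℂ) (x : ℝ) : ℝ≥0∞ :=
  ⨆ h : {h : ℝ // |h| < r}, (‖f (x + h.1)‖₊ : ℝ≥0∞)

lemma MmaxOpen_le_Mmax (r : ℝ) (f : ℝ → ℂ) : MmaxOpen r f ≤ Mmax r f := fun _ =>
  iSup_le fun h => le_iSup_of_le (⟨h.1, h.2.le⟩ : {h : ℝ // |h| ≤ r}) le_rfl

lemma lowerSemicontinuous_MmaxOpen (r : ℝ) (f : ℝ → ℂ) : LowerSemicontinuous (MmaxOpen r f) := by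
  intro x t ht
  obtain ⟨⟨h, hh⟩, hlt⟩ := lt_iSup_iff.mp ht
  rw [Metric.eventually_nhds_iff]
  refine ⟨r - |h|, by linarith, fun {y} hy => hlt.trans_le ?_⟩
  have hshift : |x + h - y| < r := by
    rw [Real.dist_eq, abs_sub_comm] at hy
    calc |x + h - y| = |h + (x - y)| := by ring_nf
      _ ≤ |h| + |x - y| := abs_add_le _ _
      _ < r := by linarith
  exact le_iSup_of_le (⟨x + h - y, hshift⟩ : {h : ℝ // |h| < r}) (by rw [add_sub_cancel])

lemma measurable_MmaxOpen (r : ℝ) (f : ℝ → ℂ) : Measurable (MmaxOpen r f) :=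
  (lowerSemicontinuous_MmaxOpen r f).measurable

/-- Rounding `h / r` to the nearest integer. -/
lemma exists_mem_Icc_abs_sub_mul_lt {r h : ℝ} (hr : 0 < r) {N : ℕ} (hh : |h| ≤ N * r) :
    ∃ ν ∈ Finset.Icc (-(N : ℤ)) N, |h - ν * r| < r := by
  have hround := abs_sub_round (h / r)
  have hdiv : |h / r| ≤ N := by rwa [abs_div, abs_of_pos hr, div_le_iff₀ hr]
  refine ⟨round (h / r), ?_, ?_⟩
  · rw [Finset.mem_Icc, ← abs_le]
    have hlt : |(round (h / r) : ℝ)| < N + 1 := by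
      calc |(round (h / r) : ℝ)| = |h / r - (h / r - round (h / r))| := by ring_nf
        _ ≤ |h / r| + |h / r - round (h / r)| := abs_sub _ _
        _ < N + 1 := by linarith
    exact Int.lt_add_one_iff.mp (by exact_mod_cast hlt)
  · rw [show h - round (h / r) * r = (h / r - round (h / r)) * r by field_simp, abs_mul,
      abs_of_pos hr]
    nlinarith

/-- A ball of radius `R ≤ N r` is covered by `2N + 1` open balls of radius `r`. -/
lemma Mmax_le_sup_MmaxOpen {R r : ℝ} (hr : 0 < r) {N : ℕ} (hRN : R ≤ N * r) (f : ℝ → ℂ)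
    (x : ℝ) :
    Mmax R f x ≤ (Finset.Icc (-(N : ℤ)) N).sup fun ν => MmaxOpen r f (x + ν * r) := by
  refine iSup_le fun ⟨h, hh⟩ => ?_
  obtain ⟨ν, hν, hclose⟩ := exists_mem_Icc_abs_sub_mul_lt hr (hh.trans hRN)
  refine le_trans ?_ (Finset.le_sup hν)
  exact le_iSup_of_le (⟨h - ν * r, hclose⟩ : {h : ℝ // |h| < r}) (by rw [add_add_sub_cancel])

lemma pNorm_mono (p : ℝ≥0∞) {g G : ℝ → ℝ≥0∞} (hgG : g ≤ G) : pNorm p g ≤ pNorm p G := by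
  unfold pNorm
  split_ifs
  · exact essSup_mono_ae (Filter.Eventually.of_forall hgG)
  · exact ENNReal.rpow_le_rpow (lintegral_mono fun x => ENNReal.rpow_le_rpow (hgG x)
      ENNReal.toReal_nonneg) (by positivity)

/-- For `p = ∞` (where `p.toReal = 0`) the factor is `#s ^ 0 = 1`. -/
lemma pNorm_le_card_rpow_mul_of_le_sup {ι : Type*} {s : Finset ι} (hs : s.Nonempty) (τ : ι → ℝ)
    (p : ℝ≥0∞) {g G : ℝ → ℝ≥0∞} (hg : Measurable g)
    (hG : ∀ x, G x ≤ s.sup fun i => g (x + τ i)) :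
    pNorm p G ≤ (s.card : ℝ≥0∞) ^ (1 / p.toReal) * pNorm p g := by
  unfold pNorm
  split_ifs with hp
  · rw [hp, ENNReal.toReal_top, div_zero, ENNReal.rpow_zero, one_mul]
    have htranslates : ∀ᵐ x, ∀ i ∈ s, g (x + τ i) ≤ essSup g volume :=
      (Filter.eventually_all_finset s).mpr fun i _ =>
        (measurePreserving_add_right volume (τ i)).quasiMeasurePreserving.ae
          (ENNReal.ae_le_essSup g)
    refine essSup_le_of_ae_le _ ?_
    filter_upwards [htranslates] with x hx
    exact (hG x).trans (Finset.sup_le hx)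
  set q := p.toReal
  have hq : 0 ≤ q := ENNReal.toReal_nonneg
  have hpow : ∀ x, G x ^ q ≤ ∑ i ∈ s, g (x + τ i) ^ q := fun x => by
    obtain ⟨i, hi, hmax⟩ := Finset.exists_mem_eq_sup s hs fun i => g (x + τ i)
    calc G x ^ q ≤ g (x + τ i) ^ q := ENNReal.rpow_le_rpow ((hG x).trans hmax.le) hq
      _ ≤ _ := Finset.single_le_sum (f := fun i => g (x + τ i) ^ q) (fun _ _ => zero_le) hi
  have hint : ∫⁻ x, G x ^ q ≤ s.card * ∫⁻ x, g x ^ q :=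
    calc ∫⁻ x, G x ^ q ≤ ∫⁻ x, ∑ i ∈ s, g (x + τ i) ^ q := lintegral_mono hpow
      _ = ∑ i ∈ s, ∫⁻ x, g (x + τ i) ^ q :=
        lintegral_finsetSum _ fun i _ => (hg.comp (measurable_add_const _)).pow_const _
      _ = s.card * ∫⁻ x, g x ^ q := by
        simp only [lintegral_add_right_eq_self (fun y => g y ^ q), Finset.sum_const,
          nsmul_eq_mul]
  rw [← ENNReal.mul_rpow_of_nonneg _ _ (by positivity)]
  exact ENNReal.rpow_le_rpow hint (by positivity)

lemma card_Icc_neg_self (N : ℕ) : (Finset.Icc (-(N : ℤ)) N).card = 2 * N + 1 := by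
  rw [Int.card_Icc]
  omega

lemma pNorm_Mmax_le_of_le_mul {R r : ℝ} (hr : 0 < r) {N : ℕ} (hRN : R ≤ N * r) (p : ℝ≥0∞)
    (f : ℝ → ℂ) :
    pNorm p (Mmax R f) ≤ ((2 * N + 1 : ℕ) : ℝ≥0∞) ^ (1 / p.toReal) * pNorm p (Mmax r f) := by
  calc pNorm p (Mmax R f)
      ≤ ((Finset.Icc (-(N : ℤ)) N).card : ℝ≥0∞) ^ (1 / p.toReal) * pNorm p (MmaxOpen r f) :=
        pNorm_le_card_rpow_mul_of_le_sup (Finset.nonempty_Icc.mpr (neg_le_self N.cast_nonneg))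
          _ p (measurable_MmaxOpen r f) (Mmax_le_sup_MmaxOpen hr hRN f)
    _ ≤ _ := by
        rw [card_Icc_neg_self]
        exact mul_le_mul_right (pNorm_mono p (MmaxOpen_le_Mmax r f)) _

lemma two_mul_two_pow_add_one_rpow_le (ℓ : ℕ) {q : ℝ} (hq : 0 ≤ q) :
    ((2 * 2 ^ (ℓ + 2) + 1 : ℕ) : ℝ≥0∞) ^ (1 / q) ≤
      ENNReal.ofReal (2 ^ (4 / q) * 2 ^ ((ℓ : ℝ) / q)) := by
  have hcard : 2 * 2 ^ (ℓ + 2) + 1 ≤ 2 ^ (ℓ + 4) := by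
    have := Nat.one_le_two_pow (n := ℓ + 2)
    rw [show 2 ^ (ℓ + 4) = 4 * 2 ^ (ℓ + 2) by ring]
    omega
  rw [← Real.rpow_add two_pos, ← ENNReal.ofReal_rpow_of_pos two_pos, ENNReal.ofReal_ofNat,
    show 4 / q + ℓ / q = ((ℓ + 4 : ℕ) : ℝ) * (1 / q) by push_cast; ring, ENNReal.rpow_mul,
    ENNReal.rpow_natCast]
  exact ENNReal.rpow_le_rpow (by exact_mod_cast hcard) (by positivity)

theorem maximal_function_comparison_general (p : ℝ≥0∞) :
    ∃ C : ℝ, 0 < C ∧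
      ∀ (f : ℝ → ℂ) (j ℓ : ℕ),
        pNorm p (Mmax (2 ^ (-(j:ℝ) + 2)) f) ≤
          ENNReal.ofReal (C * 2 ^ ((ℓ:ℝ) / p.toReal)) *
            pNorm p (Mmax (2 ^ (-((j:ℝ) + (ℓ:ℝ)))) f) := by
  refine ⟨2 ^ (4 / p.toReal), by positivity, fun f j ℓ => ?_⟩
  have hRN : (2 : ℝ) ^ (-(j:ℝ) + 2) ≤ ((2 ^ (ℓ + 2) : ℕ) : ℝ) * 2 ^ (-((j:ℝ) + ℓ)) := by
    rw [Nat.cast_pow, Nat.cast_ofNat, ← Real.rpow_natCast, ← Real.rpow_add two_pos]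
    exact le_of_eq (congrArg _ (by push_cast; ring))
  calc _ ≤ _ := pNorm_Mmax_le_of_le_mul (by positivity) hRN p f
    _ ≤ _ := mul_le_mul_left (two_mul_two_pow_add_one_rpow_le ℓ ENNReal.toReal_nonneg) _

/-- `‖𝔐*_j f‖_p ≤ C 2^{ℓ/p} ‖𝔐_{j+ℓ} f‖_p` for `0 < p ≤ ∞`, with `C = C(p)`. -/
theorem maximal_function_comparison (p : ℝ≥0∞) (hp : 0 < p) :
    ∃ C : ℝ, 0 < C ∧
      ∀ (f : ℝ → ℂ) (j ℓ : ℕ),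
        pNorm p (Mmax (2 ^ (-(j:ℝ) + 2)) f) ≤
          ENNReal.ofReal (C * 2 ^ ((ℓ:ℝ) / p.toReal)) *
            pNorm p (Mmax (2 ^ (-((j:ℝ) + (ℓ:ℝ)))) f) :=
  maximal_function_comparison_general p
end
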